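/- arXiv:2206.15152 — 4 statements merged into one kernel-verified Lean document; each statement's English description precedes it below -/
import Mathlib

section
/- For every positive integer N and all real numbers δ > 0 and K > 0, there exists ε > 0 with the following property: for every K-Lipschitz function f : [0,1]^N → ℝ satisfying max f − min f ≤ 2ε, and every subset A ⊆ [0,1]^N of full Lebesgue measure, there exist a point τ∞ in the open cube (0,1)^N and N+1 sequences (τ^{j,m})_{m≥1} contained in A, for j = 1, …, N+1, such that: (1) for each j, τ^{j,m} → τ∞ as m → ∞; (2) f is differentiable at τ^{j,m} for every j and m; (3) for each j, the gradients ∇f(τ^{j,m}) converge as m → ∞ to a vector v_j ∈ ℝ^N, and the Euclidean distance from the origin to the convex hull of {v_1, …, v_{N+1}} is less than δ. -/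
/-!
Extend `f` to a `K`-Lipschitz function `F` on `ℝ^N` and minimize `F x + (δ/4) ‖x - c‖²` over the
cube, `c` being its centre. Since the oscillation of `f` is tiny, the minimizer `x₀` lies within
`1/4` of `c`, so it is an interior local minimum. At a local minimum of a locally Lipschitz
function, `0` lies in the closed convex hull of the gradients taken at nearby points of
differentiability outside any null set: adding `β ‖x - x₀‖²` makes the minimum strict, and
averaging the function over a small ball gives a function with a nearby local minimum, where its
derivative, the average of the gradients (dominated convergence), vanishes.
Removing the gradient `(δ/2) (x - c)` of the penalty, of norm at most `δ/4` near `x₀`, leaves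
convex combinations of gradients of `F` of norm `< δ/2`. Carathéodory's theorem writes them with
`N + 1` points, and compactness of the simplex and of the ball of radius `K` lets them converge as
the neighbourhoods of `x₀` shrink.
-/

open MeasureTheory Filter

/-- The closed unit cube `[0,1]^N` in `EuclideanSpace ℝ (Fin N)`. -/
def unitCube (N : ℕ) : Set (EuclideanSpace ℝ (Fin N)) :=
  (WithLp.ofLp : EuclideanSpace ℝ (Fin N) → (Fin N → ℝ)) ⁻¹' (Set.univ.pi fun _ => Set.Icc (0 : ℝ) 1)

open Metric ProbabilityTheory Set Topology Module
open scoped NNReal InnerProductSpace Gradient Pointwise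

theorem Function.Injective.sum_extend_zero {ι κ M : Type*} [Fintype ι] [Fintype κ]
    [AddCommMonoid M] {e : ι → κ} (he : e.Injective) (f : ι → M) :
    ∑ j, Function.extend e f 0 j = ∑ i, f i :=
  (Finset.sum_of_injOn e he.injOn (fun i _ ↦ Finset.mem_coe.2 (Finset.mem_univ (e i)))
    (fun j _ hj ↦ Function.extend_apply' f (0 : κ → M) j fun ⟨i, hi⟩ ↦
      hj ⟨i, by simp, hi⟩)
    (fun i _ ↦ (he.extend_apply _ _ i).symm)).symm

section ConvexHull

variable {E : Type*} [NormedAddCommGroup E] [NormedSpace ℝ E]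

theorem exists_fin_sum_eq_of_mem_convexHull [FiniteDimensional ℝ E] {n : ℕ}
    (hn : finrank ℝ E ≤ n) {s : Set E} {x : E} (hx : x ∈ convexHull ℝ s) :
    ∃ (w : Fin (n + 1) → ℝ) (z : Fin (n + 1) → E), (∀ j, 0 ≤ w j) ∧ ∑ j, w j = 1 ∧
      (∀ j, z j ∈ s) ∧ ∑ j, w j • z j = x := by
  obtain ⟨ι, _, z, w, hzs, hind, hw₀, hw₁, rfl⟩ := eq_pos_convex_span_of_mem_convexHull hx
  have : Nonempty ι := by
    by_contra! h
    simp at hw₁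
  obtain ⟨e⟩ : Nonempty (ι ↪ Fin (n + 1)) := by
    rw [Function.Embedding.nonempty_iff_card_le, Fintype.card_fin]
    have := Submodule.finrank_le (vectorSpan ℝ (range z))
    have := hind.card_le_finrank_succ
    omega
  set z₀ := z (Classical.arbitrary ι)
  refine ⟨Function.extend e w 0, Function.extend e z fun _ ↦ z₀, fun j ↦ ?_,
    e.injective.sum_extend_zero w ▸ hw₁, fun j ↦ ?_, ?_⟩
  · rcases em (∃ i, e i = j) with ⟨i, rfl⟩ | hj
    · simpa [e.injective.extend_apply] using (hw₀ i).le
    · simp [Function.extend_apply' _ _ _ hj]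
  · rcases em (∃ i, e i = j) with ⟨i, rfl⟩ | hj
    · simpa [e.injective.extend_apply] using hzs (mem_range_self i)
    · simpa [Function.extend_apply' _ _ _ hj] using hzs (mem_range_self _)
  · rw [← e.injective.sum_extend_zero]
    refine Finset.sum_congr rfl fun j _ ↦ ?_
    rcases em (∃ i, e i = j) with ⟨i, rfl⟩ | hj
    · simp only [e.injective.extend_apply]
    · simp only [Function.extend_apply' _ _ _ hj, Pi.zero_apply, zero_smul]

theorem convexHull_image_add_subset {ι : Type*} {T : Set ι} {G φ : ι → E} {b : ℝ}
    (hφ : ∀ z ∈ T, ‖φ z‖ ≤ b) :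
    convexHull ℝ ((fun z ↦ G z + φ z) '' T) ⊆ convexHull ℝ (G '' T) + closedBall (0 : E) b :=
  convexHull_min (by
      rintro _ ⟨z, hz, rfl⟩
      exact Set.add_mem_add (subset_convexHull ℝ _ (mem_image_of_mem G hz))
        (mem_closedBall_zero_iff.2 (hφ z hz)))
    ((convex_convexHull ℝ _).add (convex_closedBall (0 : E) b))

theorem exists_mem_convexHull_norm_lt_of_zero_mem_closure {ι : Type*} {T : Set ι}
    {G φ : ι → E} {b ε : ℝ} (hφ : ∀ z ∈ T, ‖φ z‖ ≤ b)
    (h₀ : (0 : E) ∈ closure (convexHull ℝ ((fun z ↦ G z + φ z) '' T))) (hε : 0 < ε) :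
    ∃ p ∈ convexHull ℝ (G '' T), ‖p‖ < b + ε := by
  obtain ⟨y, hy, hyε⟩ := Metric.mem_closure_iff.1 h₀ ε hε
  obtain ⟨p, hp, w, hw, rfl⟩ := convexHull_image_add_subset hφ hy
  rw [dist_zero_left] at hyε
  rw [mem_closedBall_zero_iff] at hw
  refine ⟨p, hp, ?_⟩
  calc ‖p‖ = ‖(p + w) - w‖ := by rw [add_sub_cancel_right]
    _ ≤ ‖p + w‖ + ‖w‖ := norm_sub_le _ _
    _ < b + ε := by linarith

theorem exists_tendsto_of_forall_exists_mem_convexHull [FiniteDimensional ℝ E] {ι : Type*}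
    {n : ℕ} (hn : finrank ℝ E ≤ n) {G : ι → E} {T : ℕ → Set ι} (hT : Antitone T) {C b : ℝ}
    (hG : ∀ x ∈ T 0, ‖G x‖ ≤ C) (h : ∀ m, ∃ p ∈ convexHull ℝ (G '' T m), ‖p‖ ≤ b) :
    ∃ (z : Fin (n + 1) → ℕ → ι) (v : Fin (n + 1) → E), (∀ j m, z j m ∈ T m) ∧
      (∀ j, Tendsto (fun m ↦ G (z j m)) atTop (𝓝 (v j))) ∧
      ∃ p ∈ convexHull ℝ (range v), ‖p‖ ≤ b := by
  have hcomb : ∀ m, ∃ (w : Fin (n + 1) → ℝ) (z : Fin (n + 1) → ι),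
      w ∈ stdSimplex ℝ (Fin (n + 1)) ∧ (∀ j, z j ∈ T m) ∧ ‖∑ j, w j • G (z j)‖ ≤ b := by
    intro m
    obtain ⟨p, hp, hpb⟩ := h m
    obtain ⟨w, y, hw₀, hw₁, hy, rfl⟩ := exists_fin_sum_eq_of_mem_convexHull hn hp
    choose z hz hzy using hy
    exact ⟨w, z, ⟨hw₀, hw₁⟩, hz, by simpa only [hzy] using hpb⟩
  choose w z hw hz hb using hcomb
  have hK : IsCompact (stdSimplex ℝ (Fin (n + 1)) ×ˢ
      univ.pi fun _ : Fin (n + 1) ↦ closedBall (0 : E) C) :=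
    (isCompact_stdSimplex ℝ _).prod (isCompact_univ_pi fun _ ↦ isCompact_closedBall _ _)
  obtain ⟨⟨a, v⟩, ⟨ha_simplex, -⟩, φ, hφ, hlim⟩ := hK.tendsto_subseq
    (x := fun m ↦ (w m, fun j ↦ G (z m j))) fun m ↦
      ⟨hw m, fun j _ ↦ mem_closedBall_zero_iff.2 (hG _ (hT (Nat.zero_le m) (hz m j)))⟩
  have hv : ∀ j, Tendsto (fun m ↦ G (z (φ m) j)) atTop (𝓝 (v j)) := fun j ↦
    (((continuous_apply j).comp continuous_snd).tendsto (a, v)).comp hlim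
  have ha : ∀ j, Tendsto (fun m ↦ w (φ m) j) atTop (𝓝 (a j)) := fun j ↦
    (((continuous_apply j).comp continuous_fst).tendsto (a, v)).comp hlim
  refine ⟨fun j m ↦ z (φ m) j, v, fun j m ↦ hT (hφ.id_le m) (hz _ j), hv, ∑ j, a j • v j,
    mem_convexHull_of_exists_fintype a v ha_simplex.1 ha_simplex.2 (fun j ↦ mem_range_self j)
      rfl, ?_⟩
  exact le_of_tendsto' ((tendsto_finsetSum _ fun j _ ↦ (ha j).smul (hv j)).norm)
    fun m ↦ hb (φ m)

end ConvexHull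

section Gradient

variable {E : Type*} [NormedAddCommGroup E] [InnerProductSpace ℝ E] {g : E → ℝ} {a x : E}
  {β : ℝ}

theorem LipschitzWith.norm_gradient_le [CompleteSpace E] {K : ℝ≥0} (hg : LipschitzWith K g)
    (x : E) : ‖∇ g x‖ ≤ K := by
  rw [gradient, LinearIsometryEquiv.norm_map]
  exact norm_fderiv_le_of_lipschitz ℝ hg

theorem LocallyLipschitz.add_mul_norm_sub_sq (hg : LocallyLipschitz g) (β : ℝ) (a : E) :
    LocallyLipschitz fun z ↦ g z + β * ‖z - a‖ ^ 2 :=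
  hg.add (contDiff_const.mul ((contDiff_norm_sq ℝ).comp (contDiff_id.sub contDiff_const))
    ).locallyLipschitz

theorem differentiableAt_add_mul_norm_sub_sq_iff :
    DifferentiableAt ℝ (fun z ↦ g z + β * ‖z - a‖ ^ 2) x ↔ DifferentiableAt ℝ g x :=
  DifferentiableAt.add_iff_left (((differentiableAt_id.sub_const a).norm_sq ℝ).const_mul β)

theorem gradient_add_mul_norm_sub_sq [CompleteSpace E] (hg : DifferentiableAt ℝ g x) :
    ∇ (fun z ↦ g z + β * ‖z - a‖ ^ 2) x = ∇ g x + (2 * β) • (x - a) := by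
  have hsq := ((hasStrictFDerivAt_norm_sq (x - a)).hasFDerivAt.comp x
    (hasFDerivAt_sub_const a)).const_mul β
  refine HasGradientAt.gradient ?_
  rw [hasGradientAt_iff_hasFDerivAt]
  refine (hg.hasFDerivAt.add hsq).congr_fderiv ?_
  ext y
  simp only [ContinuousLinearMap.comp_id, add_apply, smul_apply, coe_innerSL_apply, map_add,
    map_smul, toDual_gradient, InnerProductSpace.toDual_apply_apply, inner_sub_left, smul_eq_mul,
    nsmul_eq_mul, Nat.cast_ofNat, add_right_inj]
  ring

theorem exists_mem_convexHull_gradient_norm_lt_of_zero_mem_closure_add [CompleteSpace E]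
    {x₀ : E} {S : Set E} {θ ε : ℝ} (hβ : 0 ≤ β)
    (h₀ : (0 : E) ∈ closure (convexHull ℝ (∇ (fun z ↦ g z + β * ‖z - a‖ ^ 2) ''
      ((ball x₀ θ ∩ {x | DifferentiableAt ℝ (fun z ↦ g z + β * ‖z - a‖ ^ 2) x}) \ S))))
    (hε : 0 < ε) :
    ∃ p ∈ convexHull ℝ (∇ g '' ((ball x₀ θ ∩ {x | DifferentiableAt ℝ g x}) \ S)),
      ‖p‖ < 2 * β * (‖x₀ - a‖ + θ) + ε := by
  simp_rw [differentiableAt_add_mul_norm_sub_sq_iff] at h₀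
  rw [image_congr fun z hz ↦ gradient_add_mul_norm_sub_sq hz.1.2] at h₀
  refine exists_mem_convexHull_norm_lt_of_zero_mem_closure (fun z hz ↦ ?_) h₀ hε
  have hz : ‖z - x₀‖ < θ := mem_ball_iff_norm.1 hz.1.1
  rw [norm_smul, Real.norm_of_nonneg (by positivity)]
  gcongr
  linarith [norm_sub_le_norm_sub_add_norm_sub z x₀ a]

end Gradient

theorem add_mem_ball_of_norm_le {E : Type*} [SeminormedAddCommGroup E] {x a y : E} {ε r : ℝ}
    (ha : a ∈ ball x ε) (hy : ‖y‖ ≤ r) : a + y ∈ ball x (ε + r) := by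
  rw [mem_ball_iff_norm, add_sub_right_comm]
  rw [mem_ball_iff_norm] at ha
  linarith [norm_add_le (a - x) y]

theorem ae_cond_comp_add_of_ae {G : Type*} [MeasurableSpace G] [AddGroup G] [MeasurableAdd G]
    (μ : Measure G) [μ.IsAddLeftInvariant] {P : G → Prop} (hP : ∀ᵐ z ∂μ, P z) (x : G)
    (s : Set G) : ∀ᵐ y ∂μ[|s], P (x + y) :=
  cond_absolutelyContinuous.ae_le ((measurePreserving_add_left μ x).quasiMeasurePreserving.ae hP)

theorem Continuous.integrable_of_ae_mem {X F : Type*} [TopologicalSpace X] [T2Space X]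
    [MeasurableSpace X] [OpensMeasurableSpace X] [NormedAddCommGroup F] {ν : Measure X}
    [IsFiniteMeasure ν] {K : Set X} (hK : IsCompact K) (hν : ∀ᵐ y ∂ν, y ∈ K) {φ : X → F}
    (hφ : Continuous φ) : Integrable φ ν := by
  rw [← Measure.restrict_eq_self_of_ae_mem hν]
  exact hφ.continuousOn.integrableOn_compact hK

section Mollification

variable {E : Type*} [NormedAddCommGroup E] [MeasurableSpace E] [BorelSpace E]
  {ν : Measure E} [IsProbabilityMeasure ν] {r : ℝ} (hν : ∀ᵐ y ∂ν, y ∈ closedBall 0 r)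
  {u : E → ℝ} (hcont : Continuous u) {L : ℝ≥0}
include hν hcont

theorem integrable_comp_add_of_ae_mem_closedBall [ProperSpace E] (x : E) :
    Integrable (fun y ↦ u (x + y)) ν :=
  (hcont.comp (continuous_const_add x)).integrable_of_ae_mem (isCompact_closedBall 0 r) hν

theorem abs_integral_comp_add_sub_le [ProperSpace E] {U : Set E} (hL : LipschitzOnWith L u U)
    {x : E} (hx : closedBall x r ⊆ U) : |∫ y, u (x + y) ∂ν - u x| ≤ L * r := by
  have hr : 0 ≤ r := nonempty_closedBall.1 hν.exists
  have hbound : ∀ᵐ y ∂ν, ‖u (x + y) - u x‖ ≤ L * r := by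
    filter_upwards [hν] with y hy
    rw [← dist_eq_norm]
    calc dist (u (x + y)) (u x) ≤ L * dist (x + y) x :=
          hL.dist_le_mul _ (hx (by simpa using hy : x + y ∈ closedBall x r)) _
            (hx (mem_closedBall_self hr))
      _ ≤ L * r := by gcongr; simpa using hy
  simpa [integral_sub (integrable_comp_add_of_ae_mem_closedBall hν hcont x)
    (integrable_const _)] using norm_integral_le_of_norm_le_const hbound

theorem lipschitzOnWith_integral_comp_add [ProperSpace E] {U T : Set E}
    (hL : LipschitzOnWith L u U) (hT : ∀ x ∈ T, closedBall x r ⊆ U) :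
    LipschitzOnWith L (fun x ↦ ∫ y, u (x + y) ∂ν) T := by
  refine LipschitzOnWith.of_dist_le_mul fun x hx x' hx' ↦ ?_
  have hbound : ∀ᵐ y ∂ν, ‖u (x + y) - u (x' + y)‖ ≤ L * dist x x' := by
    filter_upwards [hν] with y hy
    rw [← dist_eq_norm, ← dist_add_right x x' y]
    exact hL.dist_le_mul _ (hT x hx (by simpa using hy : x + y ∈ closedBall x r)) _
      (hT x' hx' (by simpa using hy : x' + y ∈ closedBall x' r))
  rw [dist_eq_norm, ← integral_sub (integrable_comp_add_of_ae_mem_closedBall hν hcont x)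
    (integrable_comp_add_of_ae_mem_closedBall hν hcont x')]
  simpa using norm_integral_le_of_norm_le_const hbound

theorem hasFDerivAt_integral_comp_add [NormedSpace ℝ E] [FiniteDimensional ℝ E] {x : E}
    {ε : ℝ} (hε : 0 < ε) (hL : LipschitzOnWith L u (ball x (ε + r)))
    (hdiff : ∀ᵐ y ∂ν, DifferentiableAt ℝ u (x + y)) :
    Integrable (fun y ↦ fderiv ℝ u (x + y)) ν ∧
      HasFDerivAt (fun x' ↦ ∫ y, u (x' + y) ∂ν) (∫ y, fderiv ℝ u (x + y) ∂ν) x := by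
  refine hasFDerivAt_integral_of_dominated_loc_of_lip (bound := fun _ ↦ (L : ℝ))
    (ball_mem_nhds x hε)
    (Eventually.of_forall fun x' ↦ (hcont.comp (continuous_const_add x')).aestronglyMeasurable)
    (integrable_comp_add_of_ae_mem_closedBall hν hcont x)
    ((measurable_fderiv ℝ u).comp (measurable_const_add x)).aestronglyMeasurable
    ?_ (integrable_const _) ?_
  · filter_upwards [hν] with y hy
    refine LipschitzOnWith.of_dist_le_mul fun a ha b hb ↦ ?_
    rw [← dist_add_right a b y, Real.nnabs_coe]
    exact hL.dist_le_mul _ (add_mem_ball_of_norm_le ha (mem_closedBall_zero_iff.1 hy)) _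
      (add_mem_ball_of_norm_le hb (mem_closedBall_zero_iff.1 hy))
  · filter_upwards [hdiff] with y hy
    exact (hasFDerivAt_comp_add_right y).2 hy.hasFDerivAt

theorem integral_gradient_comp_add_eq_zero_of_isLocalMin [InnerProductSpace ℝ E]
    [FiniteDimensional ℝ E] {x : E} {ε : ℝ} (hε : 0 < ε) (hL : LipschitzOnWith L u (ball x (ε + r)))
    (hdiff : ∀ᵐ y ∂ν, DifferentiableAt ℝ u (x + y))
    (hmin : IsLocalMin (fun x' ↦ ∫ y, u (x' + y) ∂ν) x) :
    Integrable (fun y ↦ ∇ u (x + y)) ν ∧ ∫ y, ∇ u (x + y) ∂ν = 0 := by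
  obtain ⟨hint, hderiv⟩ := hasFDerivAt_integral_comp_add hν hcont hε hL hdiff
  set Φ := (InnerProductSpace.toDual ℝ E).symm
  refine ⟨Φ.toContinuousLinearEquiv.toContinuousLinearMap.integrable_comp hint, ?_⟩
  calc ∫ y, ∇ u (x + y) ∂ν = Φ (∫ y, fderiv ℝ u (x + y) ∂ν) :=
        Φ.toLinearIsometry.integral_comp_comm _
    _ = 0 := by rw [hmin.hasFDerivAt_eq_zero hderiv, map_zero]

end Mollification

theorem exists_isLocalMin_of_abs_sub_le {E : Type*} [NormedAddCommGroup E] [ProperSpace E]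
    {f k : E → ℝ} {x₀ : E} {s β η : ℝ} (hs : 0 < s) (hk : ContinuousOn k (closedBall x₀ s))
    (hgrowth : ∀ x ∈ closedBall x₀ s, f x₀ + β * ‖x - x₀‖ ^ 2 ≤ f x)
    (hclose : ∀ x ∈ closedBall x₀ s, |k x - f x| ≤ η) (hη : 2 * η < β * s ^ 2) :
    ∃ x ∈ ball x₀ s, IsLocalMin k x := by
  obtain ⟨x, hx, hmin⟩ :=
    (isCompact_closedBall x₀ s).exists_isMinOn (nonempty_closedBall.2 hs.le) hk
  have hx₀ := mem_closedBall_self (x := x₀) hs.le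
  have hlt : ‖x - x₀‖ < s := by
    have h₁ := hgrowth x hx
    have h₂ : k x ≤ k x₀ := hmin hx₀
    have h₃ := abs_le.1 (hclose x hx)
    have h₄ := abs_le.1 (hclose x₀ hx₀)
    by_contra! hge
    rw [le_antisymm (mem_closedBall_iff_norm.1 hx) hge] at h₁
    linarith
  exact ⟨x, mem_ball_iff_norm.2 hlt,
    hmin.isLocalMin (closedBall_mem_nhds_of_mem (mem_ball_iff_norm.2 hlt))⟩

section FermatRule

variable {E : Type*} [NormedAddCommGroup E] [InnerProductSpace ℝ E] [FiniteDimensional ℝ E]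
  [MeasurableSpace E] [BorelSpace E] (μ : Measure E) [μ.IsAddHaarMeasure] {x₀ : E} {S : Set E}

theorem zero_mem_closure_convexHull_gradient_of_quadratic_growth {u : E → ℝ} {ρ β : ℝ}
    {L : ℝ≥0} (hρ : 0 < ρ) (hβ : 0 < β) (hcont : Continuous u)
    (hL : LipschitzOnWith L u (ball x₀ (3 * ρ)))
    (hgrowth : ∀ x ∈ closedBall x₀ ρ, u x₀ + β * ‖x - x₀‖ ^ 2 ≤ u x) (hS : μ S = 0) :
    (0 : E) ∈ closure (convexHull ℝ
      (∇ u '' ((ball x₀ (2 * ρ) ∩ {x | DifferentiableAt ℝ u x}) \ S))) := by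
  -- averaging over the `r`-ball moves values by at most `L r`, less than half the growth `β ρ²`
  obtain ⟨r, hr, hrρ, hrL⟩ : ∃ r, 0 < r ∧ r ≤ ρ ∧ 2 * (L * r) < β * ρ ^ 2 := by
    set c := β * ρ ^ 2 / (4 * (L + 1))
    have hc : ((L : ℝ) + 1) * c = β * ρ ^ 2 / 4 := by simp only [c]; field_simp
    have : (L : ℝ) * min ρ c ≤ (L + 1) * c :=
      mul_le_mul (by linarith) (min_le_right _ _) (by positivity) (by positivity)
    refine ⟨min ρ c, by positivity, min_le_left _ _, ?_⟩
    nlinarith [show 0 < β * ρ ^ 2 by positivity]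
  set ν := μ[|closedBall (0 : E) r]
  have : IsProbabilityMeasure ν := cond_isProbabilityMeasure_of_finite
    (measure_closedBall_pos μ 0 hr).ne' measure_closedBall_lt_top.ne
  have hν : ∀ᵐ y ∂ν, y ∈ closedBall 0 r := ae_cond_mem measurableSet_closedBall
  have hsub : ∀ x ∈ closedBall x₀ ρ, closedBall x r ⊆ ball x₀ (3 * ρ) := fun x hx ↦
    closedBall_subset_ball' (by rw [mem_closedBall] at hx; linarith)
  obtain ⟨xk, hxk, hmin⟩ := exists_isLocalMin_of_abs_sub_le hρ
    (lipschitzOnWith_integral_comp_add hν hcont hL hsub).continuousOn hgrowth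
    (fun x hx ↦ abs_integral_comp_add_sub_le hν hcont hL (hsub x hx)) hrL
  have hdiff : ∀ᵐ z ∂μ, z ∈ ball x₀ (3 * ρ) → DifferentiableAt ℝ u z := by
    filter_upwards [hL.ae_differentiableWithinAt_of_mem (μ := μ)] with z hz hzU
    exact (hz hzU).differentiableAt (isOpen_ball.mem_nhds hzU)
  have hgood : ∀ᵐ y ∂ν, xk + y ∈ ball x₀ (2 * ρ) ∧ DifferentiableAt ℝ u (xk + y) ∧
      xk + y ∉ S := by
    filter_upwards [hν, ae_cond_comp_add_of_ae μ
      (hdiff.and (measure_eq_zero_iff_ae_notMem.1 hS)) xk _] with y hy ⟨hyd, hyS⟩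
    have hyB : xk + y ∈ ball x₀ (ρ + ρ) :=
      add_mem_ball_of_norm_le hxk ((mem_closedBall_zero_iff.1 hy).trans hrρ)
    exact ⟨by rwa [← two_mul] at hyB, hyd (ball_subset_ball (by linarith) hyB), hyS⟩
  have hxk' : (ρ + r) + dist xk x₀ ≤ 3 * ρ := by rw [mem_ball] at hxk; linarith
  obtain ⟨hint, h₀⟩ := integral_gradient_comp_add_eq_zero_of_isLocalMin hν hcont hρ
    (hL.mono (ball_subset_ball' hxk')) (hgood.mono fun y hy ↦ hy.2.1) hmin
  rw [← h₀]
  refine (convex_convexHull ℝ _).closure.integral_mem isClosed_closure ?_ hint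
  filter_upwards [hgood] with y ⟨hyB, hyd, hyS⟩
  exact subset_closure (subset_convexHull ℝ _ ⟨xk + y, ⟨⟨hyB, hyd⟩, hyS⟩, rfl⟩)

theorem zero_mem_closure_convexHull_gradient_of_isLocalMin {g : E → ℝ} {θ : ℝ}
    (hg : LocallyLipschitz g) (hmin : IsLocalMin g x₀) (hS : μ S = 0) (hθ : 0 < θ) :
    (0 : E) ∈ closure (convexHull ℝ
      (∇ g '' ((ball x₀ θ ∩ {x | DifferentiableAt ℝ g x}) \ S))) := by
  obtain ⟨Lg, Ug, hUg, hgU⟩ := hg x₀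
  obtain ⟨Lq, Uq, hUq, hqU⟩ := (((contDiff_norm_sq ℝ).comp (contDiff_id.sub contDiff_const)
    ).locallyLipschitz : LocallyLipschitz fun x : E ↦ ‖x - x₀‖ ^ 2) x₀
  obtain ⟨ε, hε, hεU⟩ := Metric.mem_nhds_iff.1 (inter_mem (inter_mem hUg hUq) hmin)
  set ρ := min (ε / 3) (θ / 2)
  have hρ : 0 < ρ := by positivity
  have hρU : ball x₀ (3 * ρ) ⊆ Ug ∩ Uq ∩ {x | g x₀ ≤ g x} :=
    (ball_subset_ball (by linarith [min_le_left (ε / 3) (θ / 2)])).trans hεU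
  rw [Metric.mem_closure_iff]
  intro η hη
  set β := η / (8 * ρ)
  have hβ : 0 < β := by positivity
  have hL : LipschitzOnWith (Lg + ‖β‖₊ * Lq) (fun z ↦ g z + β * ‖z - x₀‖ ^ 2)
      (ball x₀ (3 * ρ)) :=
    (hgU.mono fun x hx ↦ (hρU hx).1.1).add
      ((lipschitzWith_smul β).comp_lipschitzOnWith (hqU.mono fun x hx ↦ (hρU hx).1.2))
  have hgrowth : ∀ x ∈ closedBall x₀ ρ, (g x₀ + β * ‖x₀ - x₀‖ ^ 2) + β * ‖x - x₀‖ ^ 2 ≤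
      g x + β * ‖x - x₀‖ ^ 2 := fun x hx ↦ by
    have : g x₀ ≤ g x := (hρU (closedBall_subset_ball (by linarith) hx)).2
    rw [sub_self, norm_zero]
    linarith
  obtain ⟨p, hp, hpη⟩ := exists_mem_convexHull_gradient_norm_lt_of_zero_mem_closure_add hβ.le
    (zero_mem_closure_convexHull_gradient_of_quadratic_growth μ hρ hβ
      ((hg.add_mul_norm_sub_sq β x₀).continuous) hL hgrowth hS) (half_pos hη)
  refine ⟨p, convexHull_mono (image_mono (sdiff_subset_sdiff_left
    (inter_subset_inter_left _ (ball_subset_ball ?_)))) hp, ?_⟩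
  · linarith [min_le_right (ε / 3) (θ / 2)]
  · have : 2 * β * (‖x₀ - x₀‖ + 2 * ρ) = η / 2 := by
      simp only [β, sub_self, norm_zero]
      field_simp
      ring
    rw [dist_zero_left]
    linarith

end FermatRule

section UnitCube

variable {N : ℕ}

noncomputable def unitCubeCenter (N : ℕ) : EuclideanSpace ℝ (Fin N) :=
  WithLp.toLp 2 fun _ ↦ 1 / 2

theorem isCompact_unitCube (N : ℕ) : IsCompact (unitCube N) :=
  (PiLp.homeomorph 2 _).isCompact_preimage.2 (isCompact_univ_pi fun _ ↦ isCompact_Icc)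

theorem mem_Ioo_of_mem_ball_unitCubeCenter {x : EuclideanSpace ℝ (Fin N)}
    (hx : x ∈ ball (unitCubeCenter N) (1 / 2)) (i : Fin N) : x i ∈ Ioo 0 1 := by
  have h := (PiLp.norm_apply_le (x - unitCubeCenter N) i).trans_lt (mem_ball_iff_norm.1 hx)
  rw [PiLp.sub_apply, Real.norm_eq_abs, abs_lt] at h
  simp only [unitCubeCenter, one_div, neg_lt_sub_iff_lt_add, lt_add_iff_pos_right] at h
  constructor <;> linarith [h.1, h.2]

theorem ball_unitCubeCenter_subset : ball (unitCubeCenter N) (1 / 2) ⊆ unitCube N :=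
  fun _ hx i _ ↦ Ioo_subset_Icc_self (mem_Ioo_of_mem_ball_unitCubeCenter hx i)

theorem unitCubeCenter_mem : unitCubeCenter N ∈ unitCube N :=
  ball_unitCubeCenter_subset (mem_ball_self (by norm_num))

theorem exists_isLocalMin_add_mul_norm_sub_sq_unitCubeCenter
    {F : EuclideanSpace ℝ (Fin N) → ℝ} (hF : Continuous F) {α : ℝ} (hα : 0 < α)
    (hosc : ∀ x ∈ unitCube N, F (unitCubeCenter N) - F x ≤ α / 16) :
    ∃ x₀, ‖x₀ - unitCubeCenter N‖ ≤ 1 / 4 ∧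
      IsLocalMin (fun x ↦ F x + α * ‖x - unitCubeCenter N‖ ^ 2) x₀ := by
  set c := unitCubeCenter N
  obtain ⟨x₀, hx₀, hmin⟩ := (isCompact_unitCube N).exists_isMinOn ⟨c, unitCubeCenter_mem⟩
    (show Continuous fun x ↦ F x + α * ‖x - c‖ ^ 2 by fun_prop).continuousOn
  have hx₀c : ‖x₀ - c‖ ≤ 1 / 4 := by
    have h₁ : F x₀ + α * ‖x₀ - c‖ ^ 2 ≤ F c + α * ‖c - c‖ ^ 2 := hmin unitCubeCenter_mem
    rw [sub_self, norm_zero] at h₁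
    have h₂ : ‖x₀ - c‖ ^ 2 ≤ (1 / 4) ^ 2 := by nlinarith [hosc x₀ hx₀]
    exact (sq_le_sq₀ (norm_nonneg _) (by norm_num)).1 h₂
  refine ⟨x₀, hx₀c, hmin.isLocalMin (mem_of_superset
    (ball_mem_nhds x₀ (by norm_num : (0 : ℝ) < 1 / 4))
    ((ball_subset_ball' ?_).trans ball_unitCubeCenter_subset))⟩
  rw [dist_eq_norm]
  linarith

end UnitCube

theorem stmt0_general (N : ℕ) (δ K : ℝ) (hδ : 0 < δ) :
    ∃ ε > (0 : ℝ),
      ∀ f : EuclideanSpace ℝ (Fin N) → ℝ,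
        LipschitzOnWith (Real.toNNReal K) f (unitCube N) →
        (∀ x ∈ unitCube N, ∀ y ∈ unitCube N, f x - f y ≤ 2 * ε) →
        ∀ A : Set (EuclideanSpace ℝ (Fin N)), A ⊆ unitCube N →
          volume (unitCube N \ A) = 0 →
          ∃ (τ : Fin (N + 1) → ℕ → EuclideanSpace ℝ (Fin N))
            (τlim : EuclideanSpace ℝ (Fin N))
            (v : Fin (N + 1) → EuclideanSpace ℝ (Fin N)),
            (∀ i : Fin N, τlim i ∈ Set.Ioo (0 : ℝ) 1) ∧
            (∀ j m, τ j m ∈ A) ∧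
            (∀ j, Tendsto (τ j) atTop (nhds τlim)) ∧
            (∀ j m, DifferentiableAt ℝ f (τ j m)) ∧
            (∀ j, Tendsto (fun m => gradient f (τ j m)) atTop (nhds (v j))) ∧
            Metric.infDist 0 (convexHull ℝ (Set.range v)) < δ := by
  refine ⟨δ / 128, by positivity, fun f hf hosc A _ hA ↦ ?_⟩
  obtain ⟨F, hF, hfF⟩ := hf.extend_real
  obtain ⟨xs, hxsc, hmin⟩ := exists_isLocalMin_add_mul_norm_sub_sq_unitCubeCenter hF.continuous
    (by positivity : 0 < δ / 4) fun x hx ↦ by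
      linarith [hfF unitCubeCenter_mem ▸ hfF hx ▸ hosc _ unitCubeCenter_mem x hx]
  have hθ : ∀ m : ℕ, 1 / ((m : ℝ) + 4) ≤ 1 / 4 := fun m ↦
    one_div_le_one_div_of_le (by norm_num) (by simp)
  have hball : ∀ m : ℕ, ball xs (1 / (m + 4)) ⊆ ball (unitCubeCenter N) (1 / 2) := fun m ↦
    ball_subset_ball' (by rw [dist_eq_norm]; linarith [hθ m])
  set T : ℕ → Set (EuclideanSpace ℝ (Fin N)) :=
    fun m ↦ (ball xs (1 / (m + 4)) ∩ {x | DifferentiableAt ℝ F x}) \ (unitCube N \ A)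
  have hT : Antitone T := fun m m' hmm' ↦ sdiff_subset_sdiff_left (inter_subset_inter_left _
    (ball_subset_ball (one_div_le_one_div_of_le (by positivity) (by simpa using hmm'))))
  have hconv : ∀ m, ∃ p ∈ convexHull ℝ (∇ F '' T m), ‖p‖ ≤ δ / 2 := fun m ↦ by
    obtain ⟨p, hp, hpδ⟩ := exists_mem_convexHull_gradient_norm_lt_of_zero_mem_closure_add
      (by positivity) (zero_mem_closure_convexHull_gradient_of_isLocalMin volume
        (hF.locallyLipschitz.add_mul_norm_sub_sq _ _) hmin hA (θ := 1 / (m + 4)) (by positivity))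
      (by positivity : 0 < δ / 4)
    exact ⟨p, hp, by nlinarith [hθ m]⟩
  obtain ⟨τ, v, hτT, hτv, p, hp, hpδ⟩ := exists_tendsto_of_forall_exists_mem_convexHull
    finrank_euclideanSpace_fin.le hT (fun x _ ↦ hF.norm_gradient_le x) hconv
  have hτc : ∀ j m, τ j m ∈ ball (unitCubeCenter N) (1 / 2) := fun j m ↦ hball m (hτT j m).1.1
  have hfF' : ∀ j m, f =ᶠ[𝓝 (τ j m)] F := fun j m ↦ mem_of_superset
    (isOpen_ball.mem_nhds (hτc j m)) fun x hx ↦ hfF (ball_unitCubeCenter_subset hx)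
  refine ⟨τ, xs, v, mem_Ioo_of_mem_ball_unitCubeCenter (hball 0 (mem_ball_self (by norm_num))),
    fun j m ↦ of_not_not fun hτA ↦ (hτT j m).2 ⟨ball_unitCubeCenter_subset (hτc j m), hτA⟩,
    fun j ↦ ?_, fun j m ↦ (hfF' j m).differentiableAt_iff.2 (hτT j m).1.2,
    fun j ↦ (hτv j).congr fun m ↦ ((hfF' j m).gradient_eq).symm,
    (infDist_le_dist_of_mem hp).trans_lt (by rw [dist_zero_left]; linarith)⟩
  refine tendsto_iff_dist_tendsto_zero.2 (squeeze_zero (fun _ ↦ dist_nonneg) (fun m ↦ ?_)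
    tendsto_one_div_add_atTop_nhds_zero_nat)
  exact (mem_ball.1 (hτT j m).1.1).le.trans
    (one_div_le_one_div_of_le (by positivity) (by linarith))

theorem stmt0 (N : ℕ) (hN : 0 < N) (δ K : ℝ) (hδ : 0 < δ) (hK : 0 < K) :
    ∃ ε > (0 : ℝ),
      ∀ f : EuclideanSpace ℝ (Fin N) → ℝ,
        LipschitzOnWith (Real.toNNReal K) f (unitCube N) →
        (∀ x ∈ unitCube N, ∀ y ∈ unitCube N, f x - f y ≤ 2 * ε) →
        ∀ A : Set (EuclideanSpace ℝ (Fin N)), A ⊆ unitCube N →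
          volume (unitCube N \ A) = 0 →
          ∃ (τ : Fin (N + 1) → ℕ → EuclideanSpace ℝ (Fin N))
            (τlim : EuclideanSpace ℝ (Fin N))
            (v : Fin (N + 1) → EuclideanSpace ℝ (Fin N)),
            (∀ i : Fin N, τlim i ∈ Set.Ioo (0 : ℝ) 1) ∧
            (∀ j m, τ j m ∈ A) ∧
            (∀ j, Tendsto (τ j) atTop (nhds τlim)) ∧
            (∀ j m, DifferentiableAt ℝ f (τ j m)) ∧
            (∀ j, Tendsto (fun m => gradient f (τ j m)) atTop (nhds (v j))) ∧
            Metric.infDist 0 (convexHull ℝ (Set.range v)) < δ :=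
  stmt0_general N δ K hδ
end

section
/- Let (A_i)_{i≥1} and (B_i)_{i≥1} be sequences of real numbers with B_i > 0 for all i, let C ∈ ℝ, and suppose that A_N / B_N → C as N → ∞. Let (n_i)_{i≥1} be positive real numbers and set 𝒜_N = Σ_{i=1}^N n_i A_i and ℬ_N = Σ_{i=1}^N n_i B_i. If n_N B_N / ℬ_{N−1} → +∞ as N → ∞, then 𝒜_N / ℬ_N → C as N → ∞. -/
/-!
Writing `g i = n i * B i` and `f i = n i * A i`, the hypothesis `f i / g i → C` says that
`f i - C * g i = o(g i)`, and summing such an estimate preserves it as soon as the partial sums of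
`g` diverge (weighted Stolz–Cesàro). The growth hypothesis forces this divergence: were the
partial sums bounded, they would converge to a positive limit while `g N → 0`, so
`g N / ∑_{i<N} g i → 0`.
-/

open Filter Finset Asymptotics Topology

theorem tendsto_sum_range_atTop_of_tendsto_div_sum_range_atTop {g : ℕ → ℝ} (hg : 0 ≤ g)
    (hgrow : Tendsto (fun N => g N / ∑ i ∈ range N, g i) atTop atTop) :
    Tendsto (fun N => ∑ i ∈ range N, g i) atTop atTop := by
  set S : ℕ → ℝ := fun N => ∑ i ∈ range N, g i
  have hmono : Monotone S := fun a b hab =>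
    sum_le_sum_of_subset_of_nonneg (range_subset_range.2 hab) fun i _ _ => hg i
  rcases tendsto_atTop_of_monotone hmono with h | ⟨l, hl⟩
  · exact h
  exfalso
  have hg0 : Tendsto g atTop (𝓝 0) := by
    simpa [S, sum_range_succ] using (hl.comp (tendsto_add_atTop_nat 1)).sub hl
  obtain ⟨N, hN⟩ := (hgrow.eventually_gt_atTop 0).exists
  have hSN : 0 < S N := (sum_nonneg fun i _ => hg i).lt_of_ne fun h => by
    simp [← h] at hN
  have hl0 : 0 < l := hSN.trans_le (hmono.ge_of_tendsto hl N)
  have := hg0.div hl hl0.ne'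
  rw [zero_div] at this
  exact not_tendsto_atTop_of_tendsto_nhds this hgrow

theorem tendsto_sum_range_div_sum_range_of_tendsto_div {f g : ℕ → ℝ} {C : ℝ}
    (hg : ∀ i, 0 < g i) (hS : Tendsto (fun N => ∑ i ∈ range N, g i) atTop atTop)
    (hlim : Tendsto (fun i => f i / g i) atTop (𝓝 C)) :
    Tendsto (fun N => (∑ i ∈ range N, f i) / ∑ i ∈ range N, g i) atTop (𝓝 C) := by
  have ho : (fun i => f i - C * g i) =o[atTop] g := by
    rw [isLittleO_iff_tendsto fun i h => absurd h (hg i).ne']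
    have heq : (fun i => (f i - C * g i) / g i) = fun i => f i / g i - C := by
      funext i
      rw [sub_div, mul_div_cancel_right₀ _ (hg i).ne']
    simpa [heq] using hlim.sub_const C
  have hdev := (ho.sum_range (fun i => (hg i).le) hS).tendsto_div_nhds_zero
  rw [← tendsto_sub_nhds_zero_iff]
  refine hdev.congr' ?_
  filter_upwards [hS.eventually_gt_atTop 0] with N hN
  rw [sum_sub_distrib, ← mul_sum, sub_div, mul_div_cancel_right₀ _ hN.ne']

theorem stmt1 (A B n : ℕ → ℝ) (hB : ∀ i, 0 < B i) (hn : ∀ i, 0 < n i) (C : ℝ)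
    (hlim : Tendsto (fun i => A i / B i) atTop (nhds C))
    (hgrow : Tendsto (fun N => n N * B N / ∑ i ∈ Finset.range N, n i * B i) atTop atTop) :
    Tendsto
      (fun N => (∑ i ∈ Finset.range N, n i * A i) / ∑ i ∈ Finset.range N, n i * B i)
      atTop (nhds C) := by
  have hnB : ∀ i, 0 < n i * B i := fun i => mul_pos (hn i) (hB i)
  refine tendsto_sum_range_div_sum_range_of_tendsto_div hnB
    (tendsto_sum_range_atTop_of_tendsto_div_sum_range_atTop (fun i => (hnB i).le) hgrow) ?_
  simpa only [mul_div_mul_left _ _ (hn _).ne'] using hlim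
end

section
/- Let ℓ > 0, let t₀ and ε satisfy 0 < t₀ − ε and t₀ + ε < 1, and let J = [[0, −1], [1, 0]]. Let A, B : ℝ → M₂(ℝ) be continuous matrix-valued functions such that A(t) = 0 for all t ∈ (t₀ − ε, t₀ + ε) and B(t) = 0 for all t ∉ [t₀ − ε, t₀ + ε]. Let R : ℝ × [0,1] → M₂(ℝ), written (s, t) ↦ R_s(t), be smooth in (s, t) and satisfy, for every s ∈ ℝ: ∂_t R_s(t) = ℓ^{−2} · J · (−A(t) + (sℓ/2) B(t)) · R_s(t) for all t ∈ [0,1], and R_s(0) = I₂. Assume R₀(t₀) is invertible. Then ∂_s|_{s=0} R_s(1) = R₀(1) · R₀(t₀)^{−1} · ( (1/(2ℓ)) ∫_{t₀−ε}^{t₀+ε} J · B(t) dt ) · R₀(t₀). -/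
open MeasureTheory

attribute [local instance] Matrix.normedAddCommGroup Matrix.normedSpace

noncomputable def Jmat : Matrix (Fin 2) (Fin 2) ℝ := !![0, -1; 1, 0]

local notation "Mat" => Matrix (Fin 2) (Fin 2) ℝ

lemma norm_mul_le₂ (P Q : Mat) : ‖P * Q‖ ≤ 2 * ‖P‖ * ‖Q‖ := by
  rw [Matrix.norm_le_iff (by positivity)]
  intro i j
  rw [Matrix.mul_apply, Fin.sum_univ_two]
  calc ‖P i 0 * Q 0 j + P i 1 * Q 1 j‖ ≤ ‖P i 0 * Q 0 j‖ + ‖P i 1 * Q 1 j‖ := norm_add_le _ _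
    _ ≤ ‖P‖ * ‖Q‖ + ‖P‖ * ‖Q‖ := by
        rw [norm_mul, norm_mul]
        gcongr <;> exact Matrix.norm_entry_le_entrywise_sup_norm _
    _ = 2 * ‖P‖ * ‖Q‖ := by ring

lemma isBBM_mul : IsBoundedBilinearMap ℝ (fun p : Mat × Mat => p.1 * p.2) where
  add_left := fun _ _ _ => add_mul _ _ _
  smul_left := fun _ _ _ => smul_mul_assoc _ _ _
  add_right := fun _ _ _ => mul_add _ _ _
  smul_right := fun _ _ _ => mul_smul_comm _ _ _
  bound := ⟨2, two_pos, fun x y => norm_mul_le₂ x y⟩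

lemma HasDerivAt.matmul {f g : ℝ → Mat} {f' g' : Mat} {x : ℝ}
    (hf : HasDerivAt f f' x) (hg : HasDerivAt g g' x) :
    HasDerivAt (fun t => f t * g t) (f x * g' + f' * g x) x := by
  have h := (isBBM_mul.hasFDerivAt (f x, g x)).comp_hasDerivAt x (hf.prodMk hg)
  simp [IsBoundedBilinearMap.deriv_apply] at h
  exact h

lemma ode_zero {a b : ℝ} (P g : ℝ → Mat)
    (hP : ContinuousOn P (Set.Icc a b))
    (hg : ∀ t ∈ Set.Icc a b, HasDerivAt g (P t * g t) t)
    (hga : g a = 0) : ∀ t ∈ Set.Icc a b, g t = 0 := by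
  obtain ⟨K, hK⟩ := (isCompact_Icc (a := a) (b := b)).exists_bound_of_continuousOn hP
  intro t ht
  have h := norm_le_gronwallBound_of_norm_deriv_right_le (f := g)
    (f' := fun t => P t * g t) (δ := 0) (K := 2 * K) (ε := 0) (a := a) (b := b)
    (fun u hu => ((hg u hu).continuousAt).continuousWithinAt)
    (fun u hu => ((hg u (Set.Ico_subset_Icc_self hu)).hasDerivWithinAt))
    (by simp [hga])
    (fun u hu => by
      have h2 := norm_mul_le₂ (P u) (g u)
      have h3 : ‖P u‖ ≤ K := hK u (Set.Ico_subset_Icc_self hu)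
      have : (0:ℝ) ≤ ‖g u‖ := norm_nonneg _
      nlinarith)
    t ht
  rw [gronwallBound_ε0] at h
  simpa using h

theorem stmt2 (ℓ t₀ ε : ℝ) (hℓ : 0 < ℓ) (h₁ : 0 < t₀ - ε) (h₂ : t₀ + ε < 1)
    (A B : ℝ → Matrix (Fin 2) (Fin 2) ℝ) (hA : Continuous A) (hB : Continuous B)
    (hA0 : ∀ t ∈ Set.Ioo (t₀ - ε) (t₀ + ε), A t = 0)
    (hB0 : ∀ t ∉ Set.Icc (t₀ - ε) (t₀ + ε), B t = 0)
    (R : ℝ → ℝ → Matrix (Fin 2) (Fin 2) ℝ)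
    (hsmooth : ContDiff ℝ (⊤ : ℕ∞) (fun p : ℝ × ℝ => R p.1 p.2))
    (hode : ∀ s : ℝ, ∀ t ∈ Set.Icc (0 : ℝ) 1,
      HasDerivAt (fun u => R s u)
        ((ℓ ^ 2)⁻¹ • (Jmat * (-(A t) + (s * ℓ / 2) • B t) * R s t)) t)
    (hinit : ∀ s : ℝ, R s 0 = 1)
    (hinv : IsUnit (R 0 t₀)) :
    HasDerivAt (fun s => R s 1)
      (R 0 1 * (R 0 t₀)⁻¹ *
        ((2 * ℓ)⁻¹ • ∫ t in (t₀ - ε)..(t₀ + ε), Jmat * B t) * R 0 t₀) 0 := by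
  set a := t₀ - ε with ha_def
  set b := t₀ + ε with hb_def
  set F : ℝ × ℝ → Mat := fun p => R p.1 p.2 with hFdef
  have hF1 : Differentiable ℝ F := hsmooth.differentiable (by simp)
  have hFd := hsmooth.fderiv_right (m := (⊤ : ℕ∞)) (by simp)
  set Φ : ℝ × ℝ → (ℝ × ℝ) →L[ℝ] (ℝ × ℝ) →L[ℝ] Mat := fderiv ℝ (fderiv ℝ F) with hΦdef
  have hΦ : ∀ p, HasFDerivAt (fderiv ℝ F) (Φ p) p :=
    fun p => ((hFd.differentiable (by simp)) p).hasFDerivAt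
  set V : ℝ → Mat := fun t => fderiv ℝ F (0, t) (1, 0) with hVdef
  have hViaS : ∀ s t : ℝ, HasDerivAt (fun s' => R s' t) (fderiv ℝ F (s, t) (1, 0)) s := by
    intro s t
    exact (hF1 (s, t)).hasFDerivAt.comp_hasDerivAt s ((hasDerivAt_id s).prodMk (hasDerivAt_const s t))
  have hViaT : ∀ s t : ℝ, HasDerivAt (fun u => R s u) (fderiv ℝ F (s, t) (0, 1)) t := by
    intro s t
    exact (hF1 (s, t)).hasFDerivAt.comp_hasDerivAt t ((hasDerivAt_const t s).prodMk (hasDerivAt_id t))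
  have hVt : ∀ t : ℝ, HasDerivAt V (Φ (0, t) (0, 1) (1, 0)) t := by
    intro t
    have hL := (ContinuousLinearMap.apply ℝ Mat ((1:ℝ), (0:ℝ))).hasFDerivAt
      (x := fderiv ℝ F (0, t))
    have h2 := (hL.comp (0, t) (hΦ (0, t))).comp_hasDerivAt t
      ((hasDerivAt_const t (0:ℝ)).prodMk (hasDerivAt_id t))
    exact h2
  have hsymm : ∀ t : ℝ, Φ (0, t) (0, 1) (1, 0) = Φ (0, t) (1, 0) (0, 1) := by
    intro t
    exact (hsmooth.contDiffAt.isSymmSndFDerivAt (by rw [minSmoothness_of_isRCLikeNormedField]; exact WithTop.coe_le_coe.2 (le_top : (2:ℕ∞) ≤ ⊤))) _ _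
  have hΦs : ∀ t : ℝ, HasDerivAt (fun s => fderiv ℝ F (s, t) (0, 1)) (Φ (0, t) (1, 0) (0, 1)) 0 := by
    intro t
    have hL := (ContinuousLinearMap.apply ℝ Mat ((0:ℝ), (1:ℝ))).hasFDerivAt
      (x := fderiv ℝ F (0, t))
    have h2 := (hL.comp (0, t) (hΦ (0, t))).comp_hasDerivAt 0
      ((hasDerivAt_id (0:ℝ)).prodMk (hasDerivAt_const (0:ℝ) t))
    simp at h2
    exact h2
  set P : ℝ → Mat := fun t => (ℓ ^ 2)⁻¹ • (Jmat * (-(A t))) with hPdef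
  have hPc : Continuous P := by
    rw [hPdef]; exact ((continuous_const.matrix_mul hA.neg)).fun_const_smul _
  have hV0 : V 0 = 0 := by
    have h2 : HasDerivAt (fun s' : ℝ => R s' 0) 0 0 := by
      have : (fun s' : ℝ => R s' 0) = fun _ => (1 : Mat) := funext hinit
      rw [this]; exact hasDerivAt_const 0 1
    exact (hViaS 0 0).unique h2
  -- the ODE satisfied by V
  have hVode : ∀ t ∈ Set.Icc (0:ℝ) 1,
      HasDerivAt V (P t * V t + (2 * ℓ)⁻¹ • (Jmat * B t * R 0 t)) t := by
    intro t ht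
    have hHeq : (fun s => fderiv ℝ F (s, t) (0, 1)) =
        fun s => (ℓ ^ 2)⁻¹ • (Jmat * (-(A t) + (s * ℓ / 2) • B t) * R s t) :=
      funext fun s => (hViaT s t).unique (hode s t ht)
    have h1 : HasDerivAt (fun s : ℝ => -(A t) + (s * ℓ / 2) • B t) ((1 * ℓ / 2) • B t) 0 :=
      ((((hasDerivAt_id (0:ℝ)).mul_const ℓ).div_const 2).smul_const (B t)).const_add (-(A t))
    have h2 := (hasDerivAt_const (0:ℝ) Jmat).matmul h1
    have h3 := hViaS 0 t
    have h4 := (h2.matmul h3).const_smul ((ℓ ^ 2)⁻¹)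
    have h5 := hΦs t
    rw [hHeq] at h5
    have h6 := h5.unique h4
    have hvt := hVt t
    rw [hsymm t, h6] at hvt
    have hs : (ℓ ^ 2)⁻¹ * (1 * ℓ / 2) = (2 * ℓ)⁻¹ := by
      field_simp
    convert hvt using 1
    simp only [zero_mul, zero_div, zero_smul, add_zero, mul_zero, zero_add, smul_add,
      mul_smul_comm, smul_mul_assoc, smul_smul, hs]
    rw [smul_mul_assoc]
  -- final goal reduces to a computation of V 1
  have hgoal := hViaS 0 1
  have hmain : V 1 = R 0 1 * (R 0 t₀)⁻¹ *
      ((2 * ℓ)⁻¹ • ∫ t in a..b, Jmat * B t) * R 0 t₀ := by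
    rcases le_or_gt ε 0 with hε | hε
    · -- degenerate case: B ≡ 0
      have hBzero : ∀ t : ℝ, B t = 0 := by
        rcases lt_or_eq_of_le hε with hε' | hε0
        · intro t
          apply hB0
          intro hc
          have := hc.1.trans hc.2
          simp only [ha_def, hb_def] at this
          linarith
        · have hnotin : ∀ u : ℝ, u ≠ t₀ → u ∉ Set.Icc a b := by
            intro u hu hc
            simp only [ha_def, hb_def, hε0, sub_zero, add_zero] at hc
            exact hu (le_antisymm hc.2 hc.1)
          have hBt0 : B t₀ = 0 := by
            have hEq : Set.EqOn B 0 {(t₀ : ℝ)}ᶜ := fun u hu => hB0 u (hnotin u hu)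
            have hcl := hEq.closure hB continuous_const
            have hmem : t₀ ∈ closure ({(t₀:ℝ)}ᶜ) := by
              rw [(dense_compl_singleton (t₀:ℝ)).closure_eq]; trivial
            simpa using hcl hmem
          intro t
          rcases eq_or_ne t t₀ with hteq | hne
          · rw [hteq]; exact hBt0
          · exact hB0 t (hnotin t hne)
      have hzero : ∀ t ∈ Set.Icc (0:ℝ) 1, V t = 0 := by
        apply ode_zero P V hPc.continuousOn _ hV0
        intro t ht
        have h := hVode t ht
        simpa [hBzero t] using h
      have hV1 : V 1 = 0 := hzero 1 (by norm_num)
      have hint : (∫ t in a..b, Jmat * B t) = 0 := by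
        simp [hBzero]
      rw [hV1, hint]
      simp
    · -- main case ε > 0
      have hab : a < b := by simp only [ha_def, hb_def]; linarith
      have ht₀ab : t₀ ∈ Set.Icc a b := by
        constructor <;> simp only [ha_def, hb_def] <;> linarith
      -- A vanishes on Icc a b
      have hAIcc : ∀ t ∈ Set.Icc a b, A t = 0 := by
        have hEq : Set.EqOn A 0 (Set.Ioo a b) := fun u hu => hA0 u hu
        have hcl := hEq.closure hA continuous_const
        rw [closure_Ioo hab.ne] at hcl
        exact fun t ht => hcl ht
      -- B vanishes at the endpoints and outside
      have hBa : B a = 0 := by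
        have hEq : Set.EqOn B 0 (Set.Iio a) := fun u hu => hB0 u (fun hc => absurd hc.1 (not_le.2 hu))
        have hcl := hEq.closure hB continuous_const
        rw [closure_Iio] at hcl
        exact hcl (le_refl a)
      have hBb : B b = 0 := by
        have hEq : Set.EqOn B 0 (Set.Ioi b) := fun u hu => hB0 u (fun hc => absurd hc.2 (not_le.2 hu))
        have hcl := hEq.closure hB continuous_const
        rw [closure_Ioi] at hcl
        exact hcl (le_refl b)
      have hB1 : ∀ t ∈ Set.Icc (0:ℝ) a, B t = 0 := by
        intro t ht
        rcases eq_or_lt_of_le ht.2 with rfl | h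
        · exact hBa
        · exact hB0 t (fun hc => absurd hc.1 (not_le.2 h))
      have hB2 : ∀ t ∈ Set.Icc b 1, B t = 0 := by
        intro t ht
        rcases eq_or_lt_of_le ht.1 with rfl | h
        · exact hBb
        · exact hB0 t (fun hc => absurd hc.2 (not_le.2 h))
      have hsub1 : Set.Icc (0:ℝ) a ⊆ Set.Icc (0:ℝ) 1 :=
        Set.Icc_subset_Icc (le_refl 0) (by linarith)
      have hsub2 : Set.Icc a b ⊆ Set.Icc (0:ℝ) 1 :=
        Set.Icc_subset_Icc (by linarith) (by linarith)
      have hsub3 : Set.Icc b (1:ℝ) ⊆ Set.Icc (0:ℝ) 1 :=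
        Set.Icc_subset_Icc (by linarith) (le_refl 1)
      -- R 0 is constant on Icc a b
      have hRconst : ∀ t ∈ Set.Icc a b, R 0 t = R 0 a := by
        apply constant_of_has_deriv_right_zero
        · exact fun t _ => (hViaT 0 t).continuousAt.continuousWithinAt
        · intro x hx
          have h := hode 0 x (hsub2 (Set.Ico_subset_Icc_self hx))
          have hAx : A x = 0 := hAIcc x (Set.Ico_subset_Icc_self hx)
          rw [hAx] at h
          simpa using h.hasDerivWithinAt
      have hRt₀ : R 0 t₀ = R 0 a := hRconst t₀ ht₀ab
      -- V vanishes on [0, a]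
      have hVa : V a = 0 := by
        have := ode_zero P V hPc.continuousOn (fun t ht => by
          have h := hVode t (hsub1 ht)
          simpa [hB1 t ht] using h) hV0 a (Set.right_mem_Icc.2 h₁.le)
        exact this
      -- FTC on [a, b]
      have hRab : ∀ t ∈ Set.Icc a b, R 0 t = R 0 t₀ := fun t ht => (hRconst t ht).trans hRt₀.symm
      have hderivW : ∀ t ∈ Set.uIcc a b, HasDerivAt V ((2 * ℓ)⁻¹ • (Jmat * B t * R 0 t₀)) t := by
        intro t ht
        rw [Set.uIcc_of_le hab.le] at ht
        have h := hVode t (hsub2 ht)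
        rw [hRab t ht] at h
        have hAt : A t = 0 := hAIcc t ht
        simpa [hPdef, hAt] using h
      have hWint := Continuous.intervalIntegrable (μ := volume) (u := fun t => (2 * ℓ)⁻¹ • (Jmat * B t * R 0 t₀))
        (by exact (((continuous_const.matrix_mul hB).matrix_mul continuous_const).fun_const_smul _)) a b
      have hFTC := intervalIntegral.integral_eq_sub_of_hasDerivAt hderivW hWint
      rw [hVa, sub_zero] at hFTC
      -- compute the integral
      have hJBint := Continuous.intervalIntegrable (μ := volume) (u := fun t => Jmat * B t)
        (by exact (continuous_const.matrix_mul hB)) a b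
      set L : Mat →L[ℝ] Mat := (LinearMap.mulRight ℝ (R 0 t₀)).toContinuousLinearMap with hLdef
      have hLint := L.intervalIntegral_comp_comm hJBint
      have hVb : V b = (2 * ℓ)⁻¹ • ((∫ t in a..b, Jmat * B t) * R 0 t₀) := by
        rw [← hFTC, intervalIntegral.integral_smul]
        congr 1
      -- propagate to t = 1
      have hdet : IsUnit (R 0 t₀).det := (Matrix.isUnit_iff_isUnit_det _).1 hinv
      set C : Mat := (R 0 t₀)⁻¹ * V b with hCdef
      set g : ℝ → Mat := fun t => V t - R 0 t * C with hgdef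
      have hgb : g b = 0 := by
        have hRb : R 0 b = R 0 t₀ := hRab b (Set.right_mem_Icc.2 hab.le)
        simp only [hgdef, hCdef, hRb, ← mul_assoc, Matrix.mul_nonsing_inv _ hdet, one_mul,
          sub_self]
      have hg1 : g 1 = 0 := by
        apply ode_zero P g hPc.continuousOn _ hgb 1 (Set.right_mem_Icc.2 (by linarith))
        intro t ht
        have hV' : HasDerivAt V (P t * V t) t := by
          have h := hVode t (hsub3 ht)
          simpa [hB2 t ht] using h
        have hR' : HasDerivAt (R 0) (P t * R 0 t) t := by
          have h := hode 0 t (hsub3 ht)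
          simpa [hPdef, smul_mul_assoc] using h
        have hRC := hR'.matmul (hasDerivAt_const t C)
        simp only [mul_zero, zero_add] at hRC
        have := hV'.sub hRC
        have heq : P t * V t - P t * R 0 t * C = P t * g t := by
          simp only [hgdef, mul_sub, mul_assoc]
        rw [heq] at this
        exact this
      have hV1 : V 1 = R 0 1 * C := by
        have := sub_eq_zero.1 hg1
        simpa [hgdef] using sub_eq_zero.1 hg1
      rw [hV1, hCdef, hVb]
      rw [hRt₀]
      simp only [mul_smul_comm, smul_mul_assoc, mul_assoc]
  rw [← hmain]
  exact hgoal
end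

section
/- Let t₀ and ε satisfy 0 < t₀ − ε and t₀ + ε < 1. Let M : ℝ → M₂(ℝ) and b : ℝ → ℝ² be continuous with M(t) = 0 for all t ∈ (t₀ − ε, t₀ + ε) and b(t) = 0 for all t ∉ [t₀ − ε, t₀ + ε]. Let R : [0,1] → M₂(ℝ) be continuously differentiable with R′(t) = −M(t) · R(t) and R(0) = I₂, and assume R(t₀) is invertible. Let η : [0,1] → ℝ² be continuously differentiable with η′(t) = −b(t) − M(t) · η(t) and η(0) = 0. Then η(1) = −R(1) · R(t₀)^{−1} · ∫_{t₀−ε}^{t₀+ε} b(s) ds. -/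
open MeasureTheory
attribute [local instance] Matrix.normedAddCommGroup Matrix.normedSpace

lemma aux_mulVec_norm (A : Matrix (Fin 2) (Fin 2) ℝ) (x : Fin 2 → ℝ) :
    ‖A.mulVec x‖ ≤ 2 * ‖A‖ * ‖x‖ := by
  rw [pi_norm_le_iff_of_nonneg (by positivity)]
  intro i
  calc ‖A.mulVec x i‖ = |∑ j, A i j * x j| := by
        simp [Matrix.mulVec, dotProduct, Real.norm_eq_abs]
    _ ≤ ∑ j, |A i j * x j| := Finset.abs_sum_le_sum_abs _ _
    _ ≤ ∑ _j : Fin 2, ‖A‖ * ‖x‖ := Finset.sum_le_sum (fun j _ => by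
        rw [abs_mul]
        exact mul_le_mul (A.norm_entry_le_entrywise_sup_norm) (norm_le_pi_norm x j)
          (abs_nonneg _) (norm_nonneg _))
    _ = 2 * ‖A‖ * ‖x‖ := by simp; ring

theorem stmt4 (t₀ ε : ℝ) (h₁ : 0 < t₀ - ε) (h₂ : t₀ + ε < 1)
    (M : ℝ → Matrix (Fin 2) (Fin 2) ℝ) (b : ℝ → Fin 2 → ℝ)
    (hM : Continuous M) (hb : Continuous b)
    (hM0 : ∀ t ∈ Set.Ioo (t₀ - ε) (t₀ + ε), M t = 0)
    (hb0 : ∀ t ∉ Set.Icc (t₀ - ε) (t₀ + ε), b t = 0)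
    (R : ℝ → Matrix (Fin 2) (Fin 2) ℝ)
    (hR : ∀ t ∈ Set.Icc (0 : ℝ) 1, HasDerivAt R (-(M t) * R t) t)
    (hR0 : R 0 = 1) (hinv : IsUnit (R t₀))
    (η : ℝ → Fin 2 → ℝ)
    (hη : ∀ t ∈ Set.Icc (0 : ℝ) 1,
      HasDerivAt η (-(b t) - (M t).mulVec (η t)) t)
    (hη0 : η 0 = 0) :
    η 1 = -((R 1 * (R t₀)⁻¹).mulVec (∫ s in (t₀ - ε)..(t₀ + ε), b s)) := by
  -- clamping function
  set Q : ℝ → ℝ := fun t => max 0 (min 1 t) with hQdef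
  have hQmem : ∀ t, Q t ∈ Set.Icc (0 : ℝ) 1 :=
    fun t => ⟨le_max_left _ _, max_le zero_le_one (min_le_left _ _)⟩
  have hQeq : ∀ t ∈ Set.Icc (0 : ℝ) 1, Q t = t := by
    intro t ht
    simp only [hQdef]
    rw [min_eq_right ht.2, max_eq_right ht.1]
  -- bound on M
  obtain ⟨C, hC⟩ := isCompact_Icc.exists_bound_of_continuousOn
    (hM.continuousOn : ContinuousOn M (Set.Icc (0:ℝ) 1))
  set K : NNReal := Real.toNNReal (2 * C) with hKdef
  set v : ℝ → (Fin 2 → ℝ) → (Fin 2 → ℝ) :=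
    fun t x => -(b (Q t)) - (M (Q t)).mulVec x with hvdef
  have hlip : ∀ t, LipschitzWith K (v t) := by
    intro t
    apply LipschitzWith.of_dist_le_mul
    intro x y
    have h1 : v t x - v t y = (M (Q t)).mulVec (y - x) := by
      simp only [hvdef, Matrix.mulVec_sub]
      abel
    rw [dist_eq_norm, dist_eq_norm, h1, norm_sub_rev x y]
    calc ‖(M (Q t)).mulVec (y - x)‖ ≤ 2 * ‖M (Q t)‖ * ‖y - x‖ := aux_mulVec_norm _ _
      _ ≤ 2 * C * ‖y - x‖ := by
          have := hC (Q t) (hQmem t)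
          have hn : (0:ℝ) ≤ ‖y - x‖ := norm_nonneg _
          nlinarith [norm_nonneg (M (Q t))]
      _ ≤ (K : ℝ) * ‖y - x‖ := by
          apply mul_le_mul_of_nonneg_right _ (norm_nonneg _)
          rw [hKdef, Real.coe_toNNReal']
          exact le_max_left _ _
  have hηderiv : ∀ t ∈ Set.Icc (0:ℝ) 1, HasDerivAt η (v t (η t)) t := by
    intro t ht
    have h := hη t ht
    rwa [show v t (η t) = -(b t) - (M t).mulVec (η t) by rw [hvdef]; simp [hQeq t ht]]
  have hηcont : ContinuousOn η (Set.Icc (0:ℝ) 1) :=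
    fun t ht => (hη t ht).continuousAt.continuousWithinAt
  rcases le_or_gt ε 0 with hε | hε
  · -- degenerate case : b ≡ 0
    have hbz : ∀ t, b t = 0 := by
      have hd : Dense (Set.Icc (t₀ - ε) (t₀ + ε))ᶜ := by
        rcases lt_or_eq_of_le hε with hε' | hε'
        · rw [Set.Icc_eq_empty (by linarith)]
          simp [dense_univ]
        · rw [hε']
          simp only [add_zero, sub_zero, Set.Icc_self]
          exact dense_compl_singleton _
      have heq : Set.EqOn b 0 (closure (Set.Icc (t₀ - ε) (t₀ + ε))ᶜ) :=
        Set.EqOn.closure (fun x hx => hb0 x hx) hb continuous_const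
      intro t
      exact heq (hd.closure_eq ▸ Set.mem_univ t)
    have hbfun : b = fun _ => 0 := funext hbz
    have huniq := ODE_solution_unique (v := v) hlip
      (f := η) (g := fun _ => 0) (a := 0) (b := 1) hηcont
      (fun t ht => (hηderiv t (Set.Ico_subset_Icc_self ht)).hasDerivWithinAt)
      continuousOn_const
      (fun t ht => by
        have : v t 0 = 0 := by simp [hvdef, hbz]
        rw [this]
        exact (hasDerivAt_const t 0).hasDerivWithinAt)
      hη0
    have : η 1 = 0 := huniq ⟨zero_le_one, le_refl 1⟩
    simp [this, hbfun]
  · -- main case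
    set a1 := t₀ - ε with ha1
    set a2 := t₀ + ε with ha2
    have ha12 : a1 < a2 := by simp [ha1, ha2]; linarith
    have ha11 : (0:ℝ) < a1 := h₁
    have ha21 : a2 < 1 := h₂
    have hsub1 : Set.Icc (0:ℝ) a1 ⊆ Set.Icc 0 1 :=
      Set.Icc_subset_Icc le_rfl (by linarith)
    have hsub2 : Set.Icc a1 a2 ⊆ Set.Icc (0:ℝ) 1 :=
      Set.Icc_subset_Icc (by linarith) (by linarith)
    have hsub3 : Set.Icc a2 (1:ℝ) ⊆ Set.Icc 0 1 :=
      Set.Icc_subset_Icc (by linarith) le_rfl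
    -- M vanishes on the closed interval
    have hMIcc : ∀ t ∈ Set.Icc a1 a2, M t = 0 := by
      have heq : Set.EqOn M 0 (closure (Set.Ioo a1 a2)) :=
        Set.EqOn.closure (fun x hx => hM0 x hx) hM continuous_const
      rw [closure_Ioo (ne_of_lt ha12)] at heq
      exact fun t ht => heq ht
    -- b vanishes at the endpoints
    have hb1 : b a1 = 0 := by
      have heq : Set.EqOn b 0 (closure (Set.Iio a1)) :=
        Set.EqOn.closure (fun x hx => hb0 x (fun hc => absurd hc.1 (not_le.mpr hx))) hb
          continuous_const
      rw [closure_Iio] at heq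
      exact heq Set.self_mem_Iic
    have hb2 : b a2 = 0 := by
      have heq : Set.EqOn b 0 (closure (Set.Ioi a2)) :=
        Set.EqOn.closure (fun x hx => hb0 x (fun hc => absurd hc.2 (not_le.mpr hx))) hb
          continuous_const
      rw [closure_Ioi] at heq
      exact heq Set.self_mem_Ici
    -- Step 1 : η = 0 on [0, a1]
    have hstep1 : η a1 = 0 := by
      have huniq := ODE_solution_unique (v := v) hlip
        (f := η) (g := fun _ => 0) (a := 0) (b := a1)
        (hηcont.mono hsub1)
        (fun t ht => (hηderiv t (hsub1 (Set.Ico_subset_Icc_self ht))).hasDerivWithinAt)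
        continuousOn_const
        (fun t ht => by
          have hbt : b t = 0 := hb0 t (fun hc => by
            have := hc.1; simp only [ha1] at this; linarith [ht.2])
          have hqt : Q t = t := hQeq t (hsub1 (Set.Ico_subset_Icc_self ht))
          have : v t 0 = 0 := by simp [hvdef, hqt, hbt]
          rw [this]
          exact (hasDerivAt_const t 0).hasDerivWithinAt)
        hη0
      exact huniq ⟨le_of_lt ha11, le_rfl⟩
    -- Step 2 : η a2 = -∫ b
    set c : Fin 2 → ℝ := ∫ s in a1..a2, b s with hcdef
    have hstep2 : η a2 = -c := by
      have hFTC := intervalIntegral.integral_eq_sub_of_hasDerivAt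
        (f := η) (f' := fun t => -(b t)) (a := a1) (b := a2)
        (fun t ht => by
          rw [Set.uIcc_of_le (le_of_lt ha12)] at ht
          have h := hη t (hsub2 ht)
          rwa [hMIcc t ht, Matrix.zero_mulVec, sub_zero] at h)
        ((hb.neg).intervalIntegrable a1 a2)
      rw [intervalIntegral.integral_neg] at hFTC
      rw [hstep1, sub_zero] at hFTC
      rw [← hFTC, hcdef]
    -- R is constant on [t₀, a2]
    have hRconst : R a2 = R t₀ := by
      have ht₀mem : t₀ ∈ Set.Icc a1 a2 := ⟨by simp [ha1]; linarith, by simp [ha2]; linarith⟩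
      have hFTC := intervalIntegral.integral_eq_sub_of_hasDerivAt
        (f := R) (f' := fun _ => (0 : Matrix (Fin 2) (Fin 2) ℝ)) (a := t₀) (b := a2)
        (fun t ht => by
          rw [Set.uIcc_of_le (by simp [ha2]; linarith)] at ht
          have htm : t ∈ Set.Icc a1 a2 := ⟨le_trans ht₀mem.1 ht.1, ht.2⟩
          have h := hR t (hsub2 htm)
          rwa [hMIcc t htm, neg_zero, zero_mul] at h)
        (intervalIntegrable_const)
      simp only [intervalIntegral.integral_zero] at hFTC
      exact sub_eq_zero.mp hFTC.symm
    -- Step 3 : propagate from a2 to 1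
    set d : Fin 2 → ℝ := (R t₀)⁻¹.mulVec c with hddef
    set L : Matrix (Fin 2) (Fin 2) ℝ →L[ℝ] (Fin 2 → ℝ) :=
      LinearMap.toContinuousLinearMap
        { toFun := fun A => A.mulVec d
          map_add' := fun A B => Matrix.add_mulVec A B d
          map_smul' := fun r A => by simp [Matrix.smul_mulVec] } with hLdef
    have hLapp : ∀ A : Matrix (Fin 2) (Fin 2) ℝ, L A = A.mulVec d := fun A => rfl
    set g : ℝ → Fin 2 → ℝ := fun t => -((R t).mulVec d) with hgdef
    have hgderiv : ∀ t ∈ Set.Icc (0:ℝ) 1,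
        HasDerivAt g ((M t * R t).mulVec d) t := by
      intro t ht
      have h1 : HasDerivAt (fun s => L (R s)) (L (-(M t) * R t)) t :=
        L.hasFDerivAt.comp_hasDerivAt t (hR t ht)
      have h2 := h1.neg
      have h3 : -(L (-(M t) * R t)) = (M t * R t).mulVec d := by
        rw [hLapp]
        rw [neg_mul, Matrix.neg_mulVec, neg_neg]
      rw [h3] at h2
      exact h2
    have hgcont : ContinuousOn g (Set.Icc (0:ℝ) 1) :=
      fun t ht => (hgderiv t ht).continuousAt.continuousWithinAt
    have hRinv : R t₀ * (R t₀)⁻¹ = 1 :=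
      Matrix.mul_nonsing_inv _ ((Matrix.isUnit_iff_isUnit_det _).mp hinv)
    have hinit : η a2 = g a2 := by
      rw [hstep2, hgdef]
      simp only [hRconst, hddef, Matrix.mulVec_mulVec, hRinv, Matrix.one_mulVec]
    have huniq := ODE_solution_unique (v := v) hlip
      (f := η) (g := g) (a := a2) (b := 1)
      (hηcont.mono hsub3)
      (fun t ht => (hηderiv t (hsub3 (Set.Ico_subset_Icc_self ht))).hasDerivWithinAt)
      (hgcont.mono hsub3)
      (fun t ht => by
        have htm : t ∈ Set.Icc (0:ℝ) 1 := hsub3 (Set.Ico_subset_Icc_self ht)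
        have hbt : b t = 0 := by
          rcases eq_or_lt_of_le ht.1 with h | h
          · rw [← h]; exact hb2
          · exact hb0 t (fun hc => absurd hc.2 (not_le.mpr h))
        have hvg : v t (g t) = (M t * R t).mulVec d := by
          rw [hvdef]
          simp only [hQeq t htm, hbt, neg_zero, zero_sub, hgdef,
            Matrix.mulVec_neg, neg_neg, Matrix.mulVec_mulVec]
        rw [hvg]
        exact (hgderiv t htm).hasDerivWithinAt)
      hinit
    have hfin : η 1 = g 1 := huniq ⟨le_of_lt ha21, le_rfl⟩
    rw [hfin, hgdef]
    simp only [hddef, Matrix.mulVec_mulVec, hcdef]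
end
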